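/- For nonnegative integers μ, ν and 0 ≤ s ≤ 2·min(μ,ν), the operator B = −Σ_{j=1}^3 Z_j ⊗ Z̄_j acting on the space of polynomials in (z_1,z_2,z̄_1,z̄_2) of bidegree (2ν, 2μ) has eigenvalue 4(μ−s)(ν−s) − 2s(s+1) on the subspace |z|^{2s}·H^{2ν−s, 2μ−s}, where H^{α,β} is the space of harmonic polynomials of bidegree (α,β). In particular, the polynomial P(z,z̄) = |z|^{2s} z_1^{2ν−s} z̄_2^{2μ−s} satisfies B·P = (4(μ−s)(ν−s) − 2s(s+1))·P. -/

import Mathlib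

open MvPolynomial Finset

noncomputable section

/-- Variables: `X 0 = z₁`, `X 1 = z₂`, `X 2 = z̄₁`, `X 3 = z̄₂`. -/
abbrev PolyC4 := MvPolynomial (Fin 4) ℂ

/-- `Z₁ = -i z₁ ∂_{z₁} + i z₂ ∂_{z₂}` -/
def Zop1 (p : PolyC4) : PolyC4 :=
  -Complex.I • (X 0 * pderiv 0 p) + Complex.I • (X 1 * pderiv 1 p)

/-- `Z₂ = -z₂ ∂_{z₁} + z₁ ∂_{z₂}` -/
def Zop2 (p : PolyC4) : PolyC4 := -(X 1 * pderiv 0 p) + X 0 * pderiv 1 p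

/-- `Z₃ = -i z₂ ∂_{z₁} - i z₁ ∂_{z₂}` -/
def Zop3 (p : PolyC4) : PolyC4 :=
  -Complex.I • (X 1 * pderiv 0 p) - Complex.I • (X 0 * pderiv 1 p)

/-- `Z̄₁ = i z̄₁ ∂_{z̄₁} - i z̄₂ ∂_{z̄₂}` -/
def Wop1 (p : PolyC4) : PolyC4 :=
  Complex.I • (X 2 * pderiv 2 p) - Complex.I • (X 3 * pderiv 3 p)

/-- `Z̄₂ = -z̄₂ ∂_{z̄₁} + z̄₁ ∂_{z̄₂}` -/
def Wop2 (p : PolyC4) : PolyC4 := -(X 3 * pderiv 2 p) + X 2 * pderiv 3 p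

/-- `Z̄₃ = i z̄₂ ∂_{z̄₁} + i z̄₁ ∂_{z̄₂}` -/
def Wop3 (p : PolyC4) : PolyC4 :=
  Complex.I • (X 3 * pderiv 2 p) + Complex.I • (X 2 * pderiv 3 p)

/-- `B = -Σ_j Z_j Z̄_j` -/
def Bop (p : PolyC4) : PolyC4 := -(Zop1 (Wop1 p) + Zop2 (Wop2 p) + Zop3 (Wop3 p))

/-- `p` is bihomogeneous of bidegree `(α, β)` in `(z, z̄)`. -/
def Bihomog (α β : ℕ) (p : PolyC4) : Prop :=
  ∀ m ∈ p.support, m 0 + m 1 = α ∧ m 2 + m 3 = β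

/-- `p` is harmonic: `(∂_{z₁}∂_{z̄₁} + ∂_{z₂}∂_{z̄₂}) p = 0`. -/
def HarmonicC (p : PolyC4) : Prop :=
  pderiv 0 (pderiv 2 p) + pderiv 1 (pderiv 3 p) = 0

/-! ### Auxiliary lemmas -/

lemma X_mul_pderiv_monomial (i : Fin 4) (m : Fin 4 →₀ ℕ) (c : ℂ) :
    X i * pderiv i (monomial m c) = (m i : ℂ) • monomial m c := by
  rw [pderiv_monomial]
  by_cases h : m i = 0
  · simp [h]
  · have hm : Finsupp.single i 1 + (m - Finsupp.single i 1) = m := by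
      ext j
      rcases eq_or_ne j i with rfl | hj
      · simp only [Finsupp.add_apply, Finsupp.tsub_apply, Finsupp.single_eq_same]
        omega
      · simp [Finsupp.single_eq_of_ne' (Ne.symm hj)]
    calc X i * monomial (m - Finsupp.single i 1) (c * m i)
        = X i ^ 1 * monomial (m - Finsupp.single i 1) (c * m i) := by rw [pow_one]
      _ = monomial (Finsupp.single i 1 + (m - Finsupp.single i 1)) (c * m i) := by
          rw [monomial_single_add]
      _ = (m i : ℂ) • monomial m c := by
          rw [hm, smul_monomial, smul_eq_mul, mul_comm]

lemma euler (i j : Fin 4) (α : ℕ) (h : PolyC4)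
    (H : ∀ m ∈ h.support, m i + m j = α) :
    X i * pderiv i h + X j * pderiv j h = C (α : ℂ) * h := by
  rw [← smul_eq_C_mul]
  conv_lhs => rw [h.as_sum]
  conv_rhs => rw [h.as_sum]
  rw [map_sum, map_sum, Finset.mul_sum, Finset.mul_sum, ← Finset.sum_add_distrib,
    Finset.smul_sum]
  refine Finset.sum_congr rfl fun m hm => ?_
  rw [X_mul_pderiv_monomial, X_mul_pderiv_monomial, ← add_smul]
  have := H m hm
  congr 1
  push_cast [← this]
  ring

lemma Bop_eq (p : PolyC4) : Bop p =
    -(X 0 * X 2 * pderiv 0 (pderiv 2 p) - X 0 * X 3 * pderiv 0 (pderiv 3 p)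
      - X 1 * X 2 * pderiv 1 (pderiv 2 p) + X 1 * X 3 * pderiv 1 (pderiv 3 p)
      + 2 * (X 1 * X 3) * pderiv 0 (pderiv 2 p) + 2 * (X 0 * X 2) * pderiv 1 (pderiv 3 p)) := by
  have h02 : pderiv (0 : Fin 4) (X (2:Fin 4) : PolyC4) = 0 := pderiv_X_of_ne (by decide)
  have h03 : pderiv (0 : Fin 4) (X (3:Fin 4) : PolyC4) = 0 := pderiv_X_of_ne (by decide)
  have h12 : pderiv (1 : Fin 4) (X (2:Fin 4) : PolyC4) = 0 := pderiv_X_of_ne (by decide)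
  have h13 : pderiv (1 : Fin 4) (X (3:Fin 4) : PolyC4) = 0 := pderiv_X_of_ne (by decide)
  simp only [Bop, Zop1, Zop2, Zop3, Wop1, Wop2, Wop3, map_add, map_sub, map_neg, map_smul,
    Derivation.map_smul, Derivation.leibniz, smul_eq_mul,
    pderiv_mul, h02, h03, h12, h13, zero_mul, zero_add, add_zero, smul_sub, smul_add,
    mul_smul_comm, smul_smul, neg_smul, neg_neg, mul_neg, neg_mul,
    Complex.I_mul_I, neg_one_smul, one_smul, mul_add, mul_sub]
  ring

/-- Base case: on harmonic bihomogeneous polynomials `B` acts by `c*d`. -/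
lemma Bop_base (h : PolyC4) (c d : ℂ)
    (hE0 : X 0 * pderiv 0 h + X 1 * pderiv 1 h = C c * h)
    (hE1 : X 2 * pderiv 2 h + X 3 * pderiv 3 h = C d * h)
    (hH : pderiv 0 (pderiv 2 h) + pderiv 1 (pderiv 3 h) = 0) :
    Bop h = C (c * d) * h := by
  have h20 : pderiv (0 : Fin 4) (X (2:Fin 4) : PolyC4) = 0 := pderiv_X_of_ne (by decide)
  have h30 : pderiv (0 : Fin 4) (X (3:Fin 4) : PolyC4) = 0 := pderiv_X_of_ne (by decide)
  have h21 : pderiv (1 : Fin 4) (X (2:Fin 4) : PolyC4) = 0 := pderiv_X_of_ne (by decide)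
  have h31 : pderiv (1 : Fin 4) (X (3:Fin 4) : PolyC4) = 0 := pderiv_X_of_ne (by decide)
  have D0 : X 2 * pderiv 0 (pderiv 2 h) + X 3 * pderiv 0 (pderiv 3 h)
      = C d * pderiv 0 h := by
    have t := congrArg (pderiv (0 : Fin 4)) hE1
    simpa [pderiv_mul, h20, h30, pderiv_C_mul] using t
  have D1 : X 2 * pderiv 1 (pderiv 2 h) + X 3 * pderiv 1 (pderiv 3 h)
      = C d * pderiv 1 h := by
    have t := congrArg (pderiv (1 : Fin 4)) hE1
    simpa [pderiv_mul, h21, h31, pderiv_C_mul] using t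
  rw [Bop_eq, map_mul]
  linear_combination (X (0:Fin 4)) * D0 + (X (1:Fin 4)) * D1 + (C d) * hE0 +
    (-2*(X (1:Fin 4) * X 3) - 2*(X (0:Fin 4) * X 2)) * hH

/-- Commutation step: `B(r p) = r B p - (3 + c + d) r p` for Euler-homogeneous `p`. -/
lemma Bop_step (p : PolyC4) (c d : ℂ)
    (hE0 : X 0 * pderiv 0 p + X 1 * pderiv 1 p = C c * p)
    (hE1 : X 2 * pderiv 2 p + X 3 * pderiv 3 p = C d * p) :
    Bop ((X 0 * X 2 + X 1 * X 3) * p) =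
      (X 0 * X 2 + X 1 * X 3) * Bop p
        - C (3 + c + d) * ((X 0 * X 2 + X 1 * X 3) * p) := by
  have e20 : pderiv (0 : Fin 4) (X (2:Fin 4) : PolyC4) = 0 := pderiv_X_of_ne (by decide)
  have e30 : pderiv (0 : Fin 4) (X (3:Fin 4) : PolyC4) = 0 := pderiv_X_of_ne (by decide)
  have e10 : pderiv (0 : Fin 4) (X (1:Fin 4) : PolyC4) = 0 := pderiv_X_of_ne (by decide)
  have e21 : pderiv (1 : Fin 4) (X (2:Fin 4) : PolyC4) = 0 := pderiv_X_of_ne (by decide)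
  have e31 : pderiv (1 : Fin 4) (X (3:Fin 4) : PolyC4) = 0 := pderiv_X_of_ne (by decide)
  have e01 : pderiv (1 : Fin 4) (X (0:Fin 4) : PolyC4) = 0 := pderiv_X_of_ne (by decide)
  have e02 : pderiv (2 : Fin 4) (X (0:Fin 4) : PolyC4) = 0 := pderiv_X_of_ne (by decide)
  have e12 : pderiv (2 : Fin 4) (X (1:Fin 4) : PolyC4) = 0 := pderiv_X_of_ne (by decide)
  have e32 : pderiv (2 : Fin 4) (X (3:Fin 4) : PolyC4) = 0 := pderiv_X_of_ne (by decide)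
  have e03 : pderiv (3 : Fin 4) (X (0:Fin 4) : PolyC4) = 0 := pderiv_X_of_ne (by decide)
  have e13 : pderiv (3 : Fin 4) (X (1:Fin 4) : PolyC4) = 0 := pderiv_X_of_ne (by decide)
  have e23 : pderiv (3 : Fin 4) (X (2:Fin 4) : PolyC4) = 0 := pderiv_X_of_ne (by decide)
  rw [Bop_eq, Bop_eq]
  simp only [map_add, pderiv_mul, pderiv_X_self, e20, e30, e10, e21, e31, e01, e02, e12, e32,
    e03, e13, e23, zero_mul, mul_zero, one_mul, mul_one, add_zero, zero_add, map_ofNat]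
  linear_combination (-(X (0:Fin 4) * X 2 + X (1:Fin 4) * X 3)) * hE0 +
    (-(X (0:Fin 4) * X 2 + X (1:Fin 4) * X 3)) * hE1

/-- Euler identity propagates through multiplication by `r` (holomorphic part). -/
lemma euler_step0 (p : PolyC4) (c : ℂ)
    (hE : X 0 * pderiv 0 p + X 1 * pderiv 1 p = C c * p) :
    X 0 * pderiv 0 ((X 0 * X 2 + X 1 * X 3) * p) +
      X 1 * pderiv 1 ((X 0 * X 2 + X 1 * X 3) * p)
      = C (c + 1) * ((X 0 * X 2 + X 1 * X 3) * p) := by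
  have e20 : pderiv (0 : Fin 4) (X (2:Fin 4) : PolyC4) = 0 := pderiv_X_of_ne (by decide)
  have e30 : pderiv (0 : Fin 4) (X (3:Fin 4) : PolyC4) = 0 := pderiv_X_of_ne (by decide)
  have e10 : pderiv (0 : Fin 4) (X (1:Fin 4) : PolyC4) = 0 := pderiv_X_of_ne (by decide)
  have e21 : pderiv (1 : Fin 4) (X (2:Fin 4) : PolyC4) = 0 := pderiv_X_of_ne (by decide)
  have e31 : pderiv (1 : Fin 4) (X (3:Fin 4) : PolyC4) = 0 := pderiv_X_of_ne (by decide)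
  have e01 : pderiv (1 : Fin 4) (X (0:Fin 4) : PolyC4) = 0 := pderiv_X_of_ne (by decide)
  simp only [map_add, pderiv_mul, pderiv_X_self, e20, e30, e10, e21, e31, e01,
    zero_mul, mul_zero, one_mul, mul_one, add_zero, zero_add, map_add, C_1]
  linear_combination (X (0:Fin 4) * X 2 + X (1:Fin 4) * X 3) * hE

/-- Euler identity propagates through multiplication by `r` (antiholomorphic part). -/
lemma euler_step1 (p : PolyC4) (d : ℂ)
    (hE : X 2 * pderiv 2 p + X 3 * pderiv 3 p = C d * p) :
    X 2 * pderiv 2 ((X 0 * X 2 + X 1 * X 3) * p) +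
      X 3 * pderiv 3 ((X 0 * X 2 + X 1 * X 3) * p)
      = C (d + 1) * ((X 0 * X 2 + X 1 * X 3) * p) := by
  have e02 : pderiv (2 : Fin 4) (X (0:Fin 4) : PolyC4) = 0 := pderiv_X_of_ne (by decide)
  have e12 : pderiv (2 : Fin 4) (X (1:Fin 4) : PolyC4) = 0 := pderiv_X_of_ne (by decide)
  have e32 : pderiv (2 : Fin 4) (X (3:Fin 4) : PolyC4) = 0 := pderiv_X_of_ne (by decide)
  have e03 : pderiv (3 : Fin 4) (X (0:Fin 4) : PolyC4) = 0 := pderiv_X_of_ne (by decide)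
  have e13 : pderiv (3 : Fin 4) (X (1:Fin 4) : PolyC4) = 0 := pderiv_X_of_ne (by decide)
  have e23 : pderiv (3 : Fin 4) (X (2:Fin 4) : PolyC4) = 0 := pderiv_X_of_ne (by decide)
  simp only [map_add, pderiv_mul, pderiv_X_self, e02, e12, e32, e03, e13, e23,
    zero_mul, mul_zero, one_mul, mul_one, add_zero, zero_add, map_add, C_1]
  linear_combination (X (0:Fin 4) * X 2 + X (1:Fin 4) * X 3) * hE

lemma euler_pow0 (h : PolyC4) (c : ℂ)
    (hE : X 0 * pderiv 0 h + X 1 * pderiv 1 h = C c * h) (s : ℕ) :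
    X 0 * pderiv 0 ((X 0 * X 2 + X 1 * X 3) ^ s * h) +
      X 1 * pderiv 1 ((X 0 * X 2 + X 1 * X 3) ^ s * h)
      = C (c + s) * ((X 0 * X 2 + X 1 * X 3) ^ s * h) := by
  induction s with
  | zero => simpa using hE
  | succ n ih =>
    have hc : (c + ((n+1:ℕ):ℂ)) = c + (n:ℂ) + 1 := by push_cast; ring
    rw [pow_succ', mul_assoc, euler_step0 _ _ ih, hc]

lemma euler_pow1 (h : PolyC4) (d : ℂ)
    (hE : X 2 * pderiv 2 h + X 3 * pderiv 3 h = C d * h) (s : ℕ) :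
    X 2 * pderiv 2 ((X 0 * X 2 + X 1 * X 3) ^ s * h) +
      X 3 * pderiv 3 ((X 0 * X 2 + X 1 * X 3) ^ s * h)
      = C (d + s) * ((X 0 * X 2 + X 1 * X 3) ^ s * h) := by
  induction s with
  | zero => simpa using hE
  | succ n ih =>
    have hc : (d + ((n+1:ℕ):ℂ)) = d + (n:ℂ) + 1 := by push_cast; ring
    rw [pow_succ', mul_assoc, euler_step1 _ _ ih, hc]

/-- Main eigenvalue computation. -/
lemma Bop_main (h : PolyC4) (c d : ℂ)
    (hE0 : X 0 * pderiv 0 h + X 1 * pderiv 1 h = C c * h)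
    (hE1 : X 2 * pderiv 2 h + X 3 * pderiv 3 h = C d * h)
    (hH : pderiv 0 (pderiv 2 h) + pderiv 1 (pderiv 3 h) = 0) (s : ℕ) :
    Bop ((X 0 * X 2 + X 1 * X 3) ^ s * h)
      = C ((c - s) * (d - s) - 2 * s * (s + 1)) * ((X 0 * X 2 + X 1 * X 3) ^ s * h) := by
  induction s with
  | zero =>
    simpa using Bop_base h c d hE0 hE1 hH
  | succ n ih =>
    have e0 := euler_pow0 h c hE0 n
    have e1 := euler_pow1 h d hE1 n
    have step := Bop_step _ _ _ e0 e1
    rw [pow_succ', mul_assoc, step, ih]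
    have hC : (C ((c - (n+1:ℕ)) * (d - (n+1:ℕ)) - 2 * (n+1:ℕ) * ((n+1:ℕ) + 1)) : PolyC4)
        = C ((c - n) * (d - n) - 2 * n * (n + 1)) - C (3 + (c + n) + (d + n)) := by
      rw [← map_sub]
      congr 1
      push_cast
      ring
    rw [hC]
    ring

theorem stmt_3 (μ ν s : ℕ) (hs : s ≤ 2 * min μ ν) :
    (∀ h : PolyC4, Bihomog (2 * ν - s) (2 * μ - s) h → HarmonicC h →
      Bop ((X 0 * X 2 + X 1 * X 3) ^ s * h) =
        (4 * ((μ : ℂ) - s) * ((ν : ℂ) - s) - 2 * s * (s + 1)) •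
          ((X 0 * X 2 + X 1 * X 3) ^ s * h)) ∧
    (Bop (∑ k ∈ Finset.range (s + 1), (s.choose k : ℂ) •
        (X 0 ^ (2 * ν - s + k) * X 2 ^ k * X 1 ^ (s - k) * X 3 ^ (2 * μ - k))) =
      (4 * ((μ : ℂ) - s) * ((ν : ℂ) - s) - 2 * s * (s + 1)) •
        ∑ k ∈ Finset.range (s + 1), (s.choose k : ℂ) •
          (X 0 ^ (2 * ν - s + k) * X 2 ^ k * X 1 ^ (s - k) * X 3 ^ (2 * μ - k))) := by
  have hsν : s ≤ 2 * ν := le_trans hs (by omega)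
  have hsμ : s ≤ 2 * μ := le_trans hs (by omega)
  have hAB : ((((2 * ν - s : ℕ) : ℂ)) - s) * ((((2 * μ - s : ℕ) : ℂ)) - s) - 2 * s * (s + 1)
      = 4 * ((μ : ℂ) - s) * ((ν : ℂ) - s) - 2 * s * (s + 1) := by
    push_cast [Nat.cast_sub hsν, Nat.cast_sub hsμ]
    ring
  have part1 : ∀ h : PolyC4, Bihomog (2 * ν - s) (2 * μ - s) h → HarmonicC h →
      Bop ((X 0 * X 2 + X 1 * X 3) ^ s * h) =
        (4 * ((μ : ℂ) - s) * ((ν : ℂ) - s) - 2 * s * (s + 1)) •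
          ((X 0 * X 2 + X 1 * X 3) ^ s * h) := by
    intro h hB hH
    have hE0 := euler 0 1 (2 * ν - s) h (fun m hm => (hB m hm).1)
    have hE1 := euler 2 3 (2 * μ - s) h (fun m hm => (hB m hm).2)
    rw [smul_eq_C_mul, Bop_main h _ _ hE0 hE1 hH s, hAB]
  refine ⟨part1, ?_⟩
  have hpoly : (∑ k ∈ Finset.range (s + 1), (s.choose k : ℂ) •
        (X 0 ^ (2 * ν - s + k) * X 2 ^ k * X 1 ^ (s - k) * X 3 ^ (2 * μ - k)) : PolyC4)
      = (X 0 * X 2 + X 1 * X 3) ^ s * (X 0 ^ (2 * ν - s) * X 3 ^ (2 * μ - s)) := by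
    rw [add_pow, Finset.sum_mul]
    refine Finset.sum_congr rfl fun k hk => ?_
    have hk' : k ≤ s := by
      simp only [Finset.mem_range] at hk; omega
    have h3 : 2 * μ - k = (s - k) + (2 * μ - s) := by omega
    rw [smul_eq_C_mul, map_natCast, pow_add, h3, pow_add, mul_pow, mul_pow]
    ring
  rw [hpoly]
  apply part1
  · intro m hm
    have hrepr : (X 0 ^ (2 * ν - s) * X 3 ^ (2 * μ - s) : PolyC4)
        = monomial (Finsupp.single 0 (2 * ν - s) + Finsupp.single 3 (2 * μ - s)) 1 := by
      rw [monomial_single_add, ← X_pow_eq_monomial]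
    rw [hrepr, support_monomial] at hm
    simp only [if_neg one_ne_zero, Finset.mem_singleton] at hm
    subst hm
    constructor <;>
      simp [Finsupp.add_apply, Finsupp.single_apply]
  · show pderiv 0 (pderiv 2 _) + pderiv 1 (pderiv 3 _) = 0
    have e02 : pderiv (2 : Fin 4) (X (0:Fin 4) : PolyC4) = 0 := pderiv_X_of_ne (by decide)
    have e32 : pderiv (2 : Fin 4) (X (3:Fin 4) : PolyC4) = 0 := pderiv_X_of_ne (by decide)
    have e03 : pderiv (3 : Fin 4) (X (0:Fin 4) : PolyC4) = 0 := pderiv_X_of_ne (by decide)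
    have e01 : pderiv (1 : Fin 4) (X (0:Fin 4) : PolyC4) = 0 := pderiv_X_of_ne (by decide)
    have e31 : pderiv (1 : Fin 4) (X (3:Fin 4) : PolyC4) = 0 := pderiv_X_of_ne (by decide)
    simp [pderiv_mul, pderiv_pow, e02, e32, e03, e01, e31]

end
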